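/- Under the multiclass setting with a single label y and tree-structured marginals μᵢⱼ(xᵢ,xⱼ,y), for any q ∈ P(μ) with q(x) > 0: q(y|x) ≥ I(x,y;μ) / (I(x,y;μ) + Σ_{ȳ≠y} min_{(i,j)∈E} μᵢⱼ(xᵢ,xⱼ,ȳ)), where I(x,y;μ) = max(0, Σᵢ(1−dᵢ)μᵢ(xᵢ,y) + Σ_{ij∈E}μᵢⱼ(xᵢ,xⱼ,y)). -/

import Mathlib

/-!
Since `q(y|x) = q(x,y) / (q(x,y) + Σ_{ȳ≠y} q(x,ȳ))` and `a / (a + b)` increases in `a`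
and decreases in `b`, it suffices that `q(x,ȳ) ≤ μᵢⱼ(xᵢ,xⱼ,ȳ)` for every edge, which is
clear, and that `Σᵢ (1 - dᵢ) μᵢ(xᵢ,y) + Σ_E μᵢⱼ(xᵢ,xⱼ,y) ≤ q(x,y)`. The left side is
`Σ_z c(z) q(z,y)` where, for `S` the set of coordinates on which `z` agrees with `x`,
`c(z) = |S| - Σ_{i∈S} dᵢ + |E(S)|`. In a connected graph `c(z) ≤ 1`, and `c(z) ≤ 0` unless
`S` is everything: `Σ_{i∈S} dᵢ` counts the darts starting in `S`, and pointing each vertex of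
`S` other than a fixed `u` (taken outside `S` if possible) to a neighbour closer to `u`, while
orienting each edge of `E(S)` against these, gives `|S \ {u}| + |E(S)|` distinct such darts.
-/

open Finset

namespace SimpleGraph
variable {V : Type*} {G : SimpleGraph V}

lemma Connected.exists_adj_dist_lt (hG : G.Connected) {v u : V} (h : v ≠ u) :
    ∃ w, G.Adj v w ∧ G.dist w u < G.dist v u := by
  obtain ⟨p, hp⟩ := hG.exists_walk_length_eq_dist v u
  have hnil : ¬p.Nil := p.not_nil_of_ne h
  refine ⟨p.snd, p.adj_snd hnil, ?_⟩
  calc G.dist p.snd u ≤ p.tail.length := dist_le p.tail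
    _ < p.length := by rw [← p.length_tail_add_one hnil]; omega
    _ = G.dist v u := hp

variable [Fintype V] [DecidableRel G.Adj]

lemma card_filter_fst_mem_adj [DecidableEq V] (S : Finset V) :
    #{p : V × V | p.1 ∈ S ∧ G.Adj p.1 p.2} = ∑ v ∈ S, G.degree v := by
  rw [card_eq_sum_card_fiberwise (f := Prod.fst) (t := S) (fun p hp => (mem_filter.1 hp).2.1)]
  refine sum_congr rfl fun v hv => ?_
  rw [← card_neighborFinset_eq_degree]
  refine card_nbij Prod.snd ?_ ?_ ?_
  · intro p hp; grind [mem_neighborFinset]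
  · intro p hp p' hp' h; grind [Prod.ext_iff]
  · intro w hw; exact ⟨(v, w), by simpa [hv] using hw, rfl⟩

variable [LinearOrder V]

variable (G) in
/-- The edge set `E` of the theorem: each edge `{i, j}` with `i < j` as the pair `(i, j)`. -/
def edgePairs : Finset (V × V) := {e | e.1 < e.2 ∧ G.Adj e.1 e.2}

lemma Connected.card_filter_edgePairs_add_card_erase_le (hG : G.Connected) (S : Finset V) (u : V) :
    #{e ∈ G.edgePairs | e.1 ∈ S ∧ e.2 ∈ S} + #(S.erase u) ≤ ∑ v ∈ S, G.degree v := by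
  have : Nonempty V := ⟨u⟩
  choose! f hf_adj hf_dist using fun v (h : v ≠ u) => hG.exists_adj_dist_lt h
  let toward : V × V → Prop := fun p => p.1 ≠ u ∧ f p.1 = p.2
  have not_toward_swap : ∀ p, toward p → ¬toward p.swap := by
    rintro ⟨a, b⟩ ⟨ha, hab⟩ ⟨hb, hba⟩
    have h₁ := hf_dist a ha
    have h₂ := hf_dist b hb
    simp only [Prod.swap] at hab hba h₁ h₂
    rw [hab] at h₁; rw [hba] at h₂
    omega
  let orient : V × V → V × V := fun p => if toward p then p.swap else p
  let embed : (V × V) ⊕ V → V × V := Sum.elim orient (fun v => (v, f v))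
  have not_toward_orient : ∀ p, ¬toward (orient p) := by
    intro p
    by_cases hp : toward p
    · simpa only [orient, if_pos hp] using not_toward_swap p hp
    · simpa only [orient, if_neg hp] using hp
  have orient_eq : ∀ p, orient p = p ∨ orient p = p.swap := by
    intro p; by_cases hp : toward p <;> simp [orient, hp]
  rw [← card_disjSum, ← card_filter_fst_mem_adj]
  refine card_le_card_of_injOn embed ?_ ?_
  · rintro (e | v) h
    · simp only [edgePairs, mem_coe, inl_mem_disjSum, mem_filter, mem_univ, true_and] at h
      rcases orient_eq e with h' | h' <;> simp [embed, h'] <;> grind [G.adj_symm]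
    · simp only [mem_coe, inr_mem_disjSum, mem_erase] at h
      simpa [embed] using ⟨h.2, hf_adj v h.1⟩
  · rintro (e | v) h (e' | v') h' heq <;>
      simp only [edgePairs, mem_coe, inl_mem_disjSum, inr_mem_disjSum, mem_filter, mem_univ,
        true_and, mem_erase, embed, Sum.elim_inl, Sum.elim_inr] at h h' heq
    · rcases orient_eq e with h₁ | h₁ <;> rcases orient_eq e' with h₂ | h₂ <;>
        rw [h₁, h₂] at heq <;> grind
    · exact absurd (heq ▸ ⟨h'.1, rfl⟩) (not_toward_orient e)
    · exact absurd (heq ▸ ⟨h.1, rfl⟩) (not_toward_orient e')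
    · rw [(Prod.mk.inj heq).1]

lemma Connected.card_filter_edgePairs_add_card_le (hG : G.Connected) (S : Finset V) :
    #{e ∈ G.edgePairs | e.1 ∈ S ∧ e.2 ∈ S} + #S
      ≤ ∑ v ∈ S, G.degree v + if S = univ then 1 else 0 := by
  split_ifs with hS
  · obtain ⟨u⟩ := hG.nonempty
    have := hG.card_filter_edgePairs_add_card_erase_le S u
    rw [card_erase_of_mem (hS ▸ mem_univ u)] at this
    have : 0 < #S := card_pos.2 ⟨u, hS ▸ mem_univ u⟩
    omega
  · obtain ⟨u, hu⟩ : ∃ u, u ∉ S := by simpa [eq_univ_iff_forall] using hS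
    simpa [erase_eq_of_notMem hu] using hG.card_filter_edgePairs_add_card_erase_le S u

lemma Connected.sum_one_sub_degree_mul_add_sum_edgePairs_le (hG : G.Connected) (p : V → Prop)
    [DecidablePred p] :
    ∑ i, (1 - (G.degree i : ℝ)) * (if p i then 1 else 0)
      + ∑ e ∈ G.edgePairs, (if p e.1 ∧ p e.2 then (1 : ℝ) else 0)
    ≤ if ∀ i, p i then 1 else 0 := by
  have h_count := hG.card_filter_edgePairs_add_card_le {i | p i}
  simp only [mem_filter, mem_univ, true_and, eq_univ_iff_forall] at h_count
  have h_cast : (#{e ∈ G.edgePairs | p e.1 ∧ p e.2} : ℝ) + #{i | p i}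
      ≤ ∑ i with p i, (G.degree i : ℝ) + if ∀ i, p i then 1 else 0 := by
    exact_mod_cast h_count
  simp only [mul_ite, mul_one, mul_zero, ← sum_filter, sum_sub_distrib, sum_const, nsmul_eq_mul]
  linarith

lemma Connected.marginal_combination_le (hG : G.Connected) {X : V → Type*}
    [∀ i, Fintype (X i)] [∀ i, DecidableEq (X i)] (w : (∀ i, X i) → ℝ) (hw : ∀ z, 0 ≤ w z)
    (x : ∀ i, X i) :
    ∑ i, (1 - (G.degree i : ℝ)) * (∑ z, if z i = x i then w z else 0)
      + ∑ e ∈ G.edgePairs, ∑ z, (if z e.1 = x e.1 ∧ z e.2 = x e.2 then w z else 0)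
    ≤ w x := by
  have h_coeff : ∀ z, (∑ i, (1 - (G.degree i : ℝ)) * (if z i = x i then 1 else 0)
      + ∑ e ∈ G.edgePairs, (if z e.1 = x e.1 ∧ z e.2 = x e.2 then (1 : ℝ) else 0)) * w z
      ≤ (if z = x then 1 else 0) * w z := by
    intro z
    gcongr
    · exact hw z
    simpa only [← funext_iff] using
      hG.sum_one_sub_degree_mul_add_sum_edgePairs_le (fun i => z i = x i)
  calc _ = ∑ z, (∑ i, (1 - (G.degree i : ℝ)) * (if z i = x i then 1 else 0)
      + ∑ e ∈ G.edgePairs, (if z e.1 = x e.1 ∧ z e.2 = x e.2 then (1 : ℝ) else 0)) * w z := by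
        simp only [add_mul, sum_add_distrib, mul_sum, sum_mul, mul_ite, ite_mul, mul_one,
          mul_zero, one_mul, zero_mul]
        rw [sum_comm, sum_comm (s := G.edgePairs)]
    _ ≤ ∑ z, (if z = x then 1 else 0) * w z := sum_le_sum fun z _ => h_coeff z
    _ = w x := by simp

end SimpleGraph

lemma div_add_le_div_add {a b A B : ℝ} (ha : 0 ≤ a) (haA : a ≤ A) (hB : 0 ≤ B) (hBb : B ≤ b)
    (hAB : 0 < A + B) : a / (a + b) ≤ A / (A + B) := by
  rcases ha.eq_or_lt with rfl | ha
  · simpa using div_nonneg haA hAB.le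
  · rw [div_le_div_iff₀ (by linarith) hAB]
    nlinarith

theorem stmt9_general {n : ℕ} {X : Fin n → Type*} {Y : Type*} [∀ i, Fintype (X i)] [Fintype Y]
    [∀ i, DecidableEq (X i)] [DecidableEq Y]
    (q : (∀ i, X i) → Y → ℝ) (hq0 : ∀ z y, 0 ≤ q z y)
    (G : SimpleGraph (Fin n)) [DecidableRel G.Adj] (hG : G.IsTree)
    (x : ∀ i, X i) (y : Y)
    (hne : (Finset.univ.filter (fun e : Fin n × Fin n => e.1 < e.2 ∧ G.Adj e.1 e.2)).Nonempty)
    (hx : 0 < ∑ ybar, q x ybar) :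
    (max 0 ((∑ i, (1 - (G.degree i : ℝ)) * (∑ z, if z i = x i then q z y else 0))
        + (∑ e ∈ Finset.univ.filter (fun e : Fin n × Fin n => e.1 < e.2 ∧ G.Adj e.1 e.2),
            ∑ z, if z e.1 = x e.1 ∧ z e.2 = x e.2 then q z y else 0)))
      / ((max 0 ((∑ i, (1 - (G.degree i : ℝ)) * (∑ z, if z i = x i then q z y else 0))
          + (∑ e ∈ Finset.univ.filter (fun e : Fin n × Fin n => e.1 < e.2 ∧ G.Adj e.1 e.2),
              ∑ z, if z e.1 = x e.1 ∧ z e.2 = x e.2 then q z y else 0)))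
        + ∑ ybar ∈ Finset.univ.erase y,
            (Finset.univ.filter (fun e : Fin n × Fin n => e.1 < e.2 ∧ G.Adj e.1 e.2)).inf' hne
              (fun e => ∑ z, if z e.1 = x e.1 ∧ z e.2 = x e.2 then q z ybar else 0))
    ≤ q x y / ∑ ybar, q x ybar := by
  have h_pair : ∀ ybar, q x ybar ≤ G.edgePairs.inf' hne
      (fun e => ∑ z, if z e.1 = x e.1 ∧ z e.2 = x e.2 then q z ybar else 0) := fun ybar =>
    le_inf' _ _ fun e _ => by
      rw [← sum_filter]
      exact single_le_sum (fun z _ => hq0 z ybar) (by simp)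
  rw [← add_sum_erase univ (fun ybar => q x ybar) (mem_univ y)] at hx ⊢
  exact div_add_le_div_add (le_max_left _ _)
    (max_le (hq0 x y) (hG.connected.marginal_combination_le (q · y) (hq0 · y) x))
    (sum_nonneg fun ybar _ => hq0 x ybar) (sum_le_sum fun ybar _ => h_pair ybar) hx

/-- Multiclass robust conditional bound:
`q(y|x) ≥ I(x,y;μ) / (I(x,y;μ) + Σ_{ȳ≠y} min_{(i,j)∈E} μᵢⱼ(xᵢ,xⱼ,ȳ))`,
where `μ` are the (label-joint) marginals of `q` and `I` carries the positive part. -/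
theorem stmt9 {n : ℕ} {X : Fin n → Type*} {Y : Type*} [∀ i, Fintype (X i)] [Fintype Y]
    [∀ i, Nonempty (X i)] [Nonempty Y] [∀ i, DecidableEq (X i)] [DecidableEq Y]
    (q : (∀ i, X i) → Y → ℝ) (hq0 : ∀ z y, 0 ≤ q z y) (hq1 : ∑ z, ∑ y, q z y = 1)
    (G : SimpleGraph (Fin n)) [DecidableRel G.Adj] (hG : G.IsTree)
    (x : ∀ i, X i) (y : Y)
    (hne : (Finset.univ.filter (fun e : Fin n × Fin n => e.1 < e.2 ∧ G.Adj e.1 e.2)).Nonempty)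
    (hx : 0 < ∑ ybar, q x ybar) :
    (max 0 ((∑ i, (1 - (G.degree i : ℝ)) * (∑ z, if z i = x i then q z y else 0))
        + (∑ e ∈ Finset.univ.filter (fun e : Fin n × Fin n => e.1 < e.2 ∧ G.Adj e.1 e.2),
            ∑ z, if z e.1 = x e.1 ∧ z e.2 = x e.2 then q z y else 0)))
      / ((max 0 ((∑ i, (1 - (G.degree i : ℝ)) * (∑ z, if z i = x i then q z y else 0))
          + (∑ e ∈ Finset.univ.filter (fun e : Fin n × Fin n => e.1 < e.2 ∧ G.Adj e.1 e.2),
              ∑ z, if z e.1 = x e.1 ∧ z e.2 = x e.2 then q z y else 0)))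
        + ∑ ybar ∈ Finset.univ.erase y,
            (Finset.univ.filter (fun e : Fin n × Fin n => e.1 < e.2 ∧ G.Adj e.1 e.2)).inf' hne
              (fun e => ∑ z, if z e.1 = x e.1 ∧ z e.2 = x e.2 then q z ybar else 0))
    ≤ q x y / ∑ ybar, q x ybar :=
  stmt9_general q hq0 G hG x y hne hx
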